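/- Suppose real numbers Θ, Σ, Ω, Π satisfy (1/3)Θ + Σ = 0 and the Einstein condition (3/4)Σ((2/3)Θ - Σ) - 2Ω² + (1/4)Π = 0. Then Π = Θ² + 8Ω². In particular, if Θ and Ω are not both zero, then Π ≠ 0. -/
import Mathlib

theorem stmt_12 (Θ Sig Ω Pan : ℝ)
    (h1 : (1 / 3) * Θ + Sig = 0)
    (h2 : (3 / 4) * Sig * ((2 / 3) * Θ - Sig) - 2 * Ω ^ 2 + (1 / 4) * Pan = 0) :
    Pan = Θ ^ 2 + 8 * Ω ^ 2 ∧ (¬(Θ = 0 ∧ Ω = 0) → Pan ≠ 0) := by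
  have hP : Pan = Θ ^ 2 + 8 * Ω ^ 2 := by linear_combination 3 * (Sig - Θ) * h1 + 4 * h2
  refine ⟨hP, fun h hc => h ?_⟩
  constructor <;> nlinarith [sq_nonneg Θ, sq_nonneg Ω]
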